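/- arXiv:2505.05991 — 2 statements merged into one kernel-verified Lean document; each statement's English description precedes it below -/
import Mathlib

section
/- Let f : Θ × ℝ^d → ℝ be L_f-Lipschitz jointly in (θ, x), and let S : Θ → (nonempty compact subsets of ℝ^d) be a set-valued map that is Lipschitz in the Hausdorff distance with constant C, i.e., dist_H(S(θ₁), S(θ₂)) ≤ C‖θ₁ − θ₂‖. Then the function F(θ) := max_{x ∈ S(θ)} f(θ, x) satisfies |F(θ₁) − F(θ₂)| ≤ L_f(1 + C)‖θ₁ − θ₂‖. -/
/-!
Each `x ∈ S θ₁` has, by compactness, a nearest point `y ∈ S θ₂`, at distance at most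
`dist_H(S θ₁, S θ₂) ≤ C ‖θ₁ - θ₂‖`. Hence `f θ₁ x ≤ f θ₂ y + L_f (‖θ₁ - θ₂‖ + ‖x - y‖) ≤ F θ₂ + L_f (1 + C) ‖θ₁ - θ₂‖`;
taking the supremum over `x` and exchanging the roles of `θ₁` and `θ₂` gives the bound.
-/

open Metric

theorem sSup_image_sub_sSup_image_le_add_hausdorffDist {E : Type*} [PseudoMetricSpace E]
    {A B : Set E} (hA : A.Nonempty) (hAb : Bornology.IsBounded A) (hBne : B.Nonempty)
    (hB : IsCompact B) {g h : E → ℝ} (hh : ContinuousOn h B) {c L : ℝ} (hL : 0 ≤ L)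
    (hgh : ∀ x ∈ A, ∀ y ∈ B, g x - h y ≤ c + L * dist x y) :
    sSup (g '' A) - sSup (h '' B) ≤ c + L * hausdorffDist A B := by
  rw [sub_le_iff_le_add]
  refine csSup_le (hA.image g) ?_
  rintro _ ⟨x, hx, rfl⟩
  obtain ⟨y, hy, hxy⟩ := hB.exists_infDist_eq_dist hBne x
  have hdist : dist x y ≤ hausdorffDist A B :=
    hxy ▸ infDist_le_hausdorffDist_of_mem hx
      (hausdorffEDist_ne_top_of_nonempty_of_bounded hA hBne hAb hB.isBounded)
  have hy_le : h y ≤ sSup (h '' B) := le_csSup (hB.bddAbove_image hh) ⟨y, hy, rfl⟩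
  linarith [hgh x hx y hy, mul_le_mul_of_nonneg_left hdist hL]

theorem stmt6_general {m d : ℕ}
    (f : EuclideanSpace ℝ (Fin m) → EuclideanSpace ℝ (Fin d) → ℝ)
    (S : EuclideanSpace ℝ (Fin m) → Set (EuclideanSpace ℝ (Fin d)))
    (Lf C : ℝ) (hLf : 0 ≤ Lf)
    (hf : ∀ θ₁ x₁ θ₂ x₂, |f θ₁ x₁ - f θ₂ x₂| ≤ Lf * (‖θ₁ - θ₂‖ + ‖x₁ - x₂‖))
    (hSne : ∀ θ, (S θ).Nonempty) (hScomp : ∀ θ, IsCompact (S θ))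
    (hSlip : ∀ θ₁ θ₂, Metric.hausdorffDist (S θ₁) (S θ₂) ≤ C * ‖θ₁ - θ₂‖)
    (θ₁ θ₂ : EuclideanSpace ℝ (Fin m)) :
    |sSup (f θ₁ '' S θ₁) - sSup (f θ₂ '' S θ₂)| ≤ Lf * (1 + C) * ‖θ₁ - θ₂‖ := by
  have hcont (θ) : Continuous (f θ) :=
    (LipschitzWith.of_dist_le' (K := Lf) fun x y => by
      simpa [Real.dist_eq, dist_eq_norm] using hf θ x θ y).continuous
  have key (a b) : sSup (f a '' S a) - sSup (f b '' S b) ≤ Lf * (1 + C) * ‖a - b‖ := by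
    calc sSup (f a '' S a) - sSup (f b '' S b)
        ≤ Lf * ‖a - b‖ + Lf * hausdorffDist (S a) (S b) := by
          refine sSup_image_sub_sSup_image_le_add_hausdorffDist (hSne a) (hScomp a).isBounded
            (hSne b) (hScomp b) (hcont b).continuousOn hLf fun x _ y _ => ?_
          simpa [mul_add, dist_eq_norm] using (le_abs_self _).trans (hf a x b y)
      _ ≤ Lf * ‖a - b‖ + Lf * (C * ‖a - b‖) := by gcongr; exact hSlip a b
      _ = Lf * (1 + C) * ‖a - b‖ := by ring
  rw [abs_sub_le_iff]
  exact ⟨key θ₁ θ₂, norm_sub_rev θ₁ θ₂ ▸ key θ₂ θ₁⟩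

theorem stmt6 {m d : ℕ}
    (f : EuclideanSpace ℝ (Fin m) → EuclideanSpace ℝ (Fin d) → ℝ)
    (S : EuclideanSpace ℝ (Fin m) → Set (EuclideanSpace ℝ (Fin d)))
    (Lf C : ℝ) (hLf : 0 ≤ Lf) (hC : 0 ≤ C)
    (hf : ∀ θ₁ x₁ θ₂ x₂, |f θ₁ x₁ - f θ₂ x₂| ≤ Lf * (‖θ₁ - θ₂‖ + ‖x₁ - x₂‖))
    (hSne : ∀ θ, (S θ).Nonempty) (hScomp : ∀ θ, IsCompact (S θ))
    (hSlip : ∀ θ₁ θ₂, Metric.hausdorffDist (S θ₁) (S θ₂) ≤ C * ‖θ₁ - θ₂‖)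
    (θ₁ θ₂ : EuclideanSpace ℝ (Fin m)) :
    |sSup (f θ₁ '' S θ₁) - sSup (f θ₂ '' S θ₂)| ≤ Lf * (1 + C) * ‖θ₁ - θ₂‖ :=
  stmt6_general f S Lf C hLf hf hSne hScomp hSlip θ₁ θ₂
end

section
/- For every d ≥ 1, n ≥ 0 with d + n ≥ 2, and constants c > 0, R > 0 satisfying cR² > (d + n)/2, the tail integral satisfies ∫_{‖x‖ > R} ‖x‖^n e^{−c‖x‖²} dx ≤ 2 π^{d+n−1} c^{−1} max{(d+n)/2, 1} R^{d+n−2} e^{−cR²}, where the integral is over x ∈ ℝ^d. -/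
/-!
Polar coordinates turn the integral into `d · |B₁| · ∫_R^∞ r^(d+n-1) e^(-c r²) dr`. The surface
area `d · |B₁| = 2 π^(d/2) / Γ(d/2)` is at most `4 √π^d`, because `Γ ≥ 1/2` on `(0, ∞)`. For the
radial tail put `k = d + n - 2`: the function `G r = (k+2)/(4c) · r^k e^(-c r²)` tends to `0`, and
`-G'` dominates `r^(k+1) e^(-c r²)` wherever `(k+2)/2 ≤ c r²`, so the tail is at most `G R`.
-/

open MeasureTheory Set Filter Topology Real Module Metric

theorem Real.one_half_le_Gamma {x : ℝ} (hx : 0 < x) : 1 / 2 ≤ Gamma x := by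
  rcases le_total x 1 with hx1 | hx1
  · calc 1 / 2 ≤ Gamma 1 := by norm_num
      _ ≤ Gamma x := Gamma_strictAntiOn_Ioc.antitoneOn ⟨hx, hx1⟩ ⟨one_pos, le_rfl⟩ hx1
  rcases le_total x 2 with hx2 | hx2
  · have h : Gamma 2 ≤ Gamma (x + 1) :=
      Gamma_strictMonoOn_Ici.monotoneOn (mem_Ici.2 le_rfl) (mem_Ici.2 (by linarith))
        (by linarith)
    rw [Gamma_two, Gamma_add_one hx.ne'] at h
    nlinarith
  · calc 1 / 2 ≤ Gamma 2 := by norm_num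
      _ ≤ Gamma x := Gamma_strictMonoOn_Ici.monotoneOn (mem_Ici.2 le_rfl) hx2 hx2

theorem sqrt_pi_pow_le_pi_pow {m j : ℕ} (h : m ≤ 2 * j) : √π ^ m ≤ π ^ j := by
  calc √π ^ m ≤ √π ^ (2 * j) :=
        pow_le_pow_right₀ (one_le_sqrt.2 (by linarith [pi_gt_three])) h
    _ = π ^ j := by rw [pow_mul, sq_sqrt pi_pos.le]

theorem InnerProductSpace.finrank_mul_measureReal_unitBall_le {E : Type*} [NormedAddCommGroup E]
    [InnerProductSpace ℝ E] [FiniteDimensional ℝ E] [MeasurableSpace E] [BorelSpace E]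
    [Nontrivial E] :
    finrank ℝ E * volume.real (ball (0 : E) 1) ≤ 4 * √π ^ finrank ℝ E := by
  set d := finrank ℝ E
  have hd : (0 : ℝ) < d := Nat.cast_pos.2 finrank_pos
  have hΓ : d / 4 ≤ Gamma (d / 2 + 1) := by
    rw [Gamma_add_one (by positivity)]
    nlinarith [one_half_le_Gamma (half_pos hd)]
  rw [measureReal_def, InnerProductSpace.volume_ball, ENNReal.ofReal_one, one_pow, one_mul,
    ENNReal.toReal_ofReal (by positivity), mul_div_assoc', div_le_iff₀ (by linarith)]
  nlinarith [pow_pos (sqrt_pos.2 pi_pos) d]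

theorem MeasureTheory.setIntegral_lt_norm_fun_norm_addHaar {E F : Type*} [NormedAddCommGroup E]
    [NormedSpace ℝ E] [FiniteDimensional ℝ E] [MeasurableSpace E] [BorelSpace E] [Nontrivial E]
    [NormedAddCommGroup F] [NormedSpace ℝ F] (μ : Measure E) [μ.IsAddHaarMeasure]
    (f : ℝ → F) {R : ℝ} (hR : 0 ≤ R) :
    ∫ x in {x : E | R < ‖x‖}, f ‖x‖ ∂μ =
      finrank ℝ E • μ.real (ball 0 1) • ∫ y in Ioi R, y ^ (finrank ℝ E - 1) • f y := by
  have hS : MeasurableSet {x : E | R < ‖x‖} := measurableSet_lt measurable_const measurable_norm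
  have hind : {x : E | R < ‖x‖}.indicator (fun x => f ‖x‖) = fun x => (Ioi R).indicator f ‖x‖ :=
    funext fun x => indicator_comp_right (s := Ioi R) (g := f) (fun x : E => ‖x‖)
  rw [← integral_indicator hS, hind, integral_fun_norm_addHaar,
    ← indicator_smul (Ioi R) (fun y : ℝ => y ^ (finrank ℝ E - 1)) f,
    integral_indicator measurableSet_Ioi, Measure.restrict_restrict measurableSet_Ioi,
    Ioi_inter_Ioi, max_eq_left hR]

theorem integral_Ioi_le_of_hasDerivAt {f G G' : ℝ → ℝ} {a : ℝ}
    (hG : ∀ x ∈ Ici a, HasDerivAt G (G' x) x) (hG_lim : Tendsto G atTop (𝓝 0))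
    (hf : ∀ x ∈ Ioi a, 0 ≤ f x) (hfG' : ∀ x ∈ Ioi a, f x ≤ -G' x) :
    ∫ x in Ioi a, f x ≤ G a := by
  have hG' : ∀ x ∈ Ici a, HasDerivAt (fun x => -G x) (-G' x) x := fun x hx => (hG x hx).neg
  have hG'_nonneg : ∀ x ∈ Ioi a, 0 ≤ -G' x := fun x hx => (hf x hx).trans (hfG' x hx)
  have hlim : Tendsto (fun x => -G x) atTop (𝓝 0) := by simpa using hG_lim.neg
  calc ∫ x in Ioi a, f x ≤ ∫ x in Ioi a, -G' x :=
        integral_mono_of_nonneg (ae_restrict_of_forall_mem measurableSet_Ioi hf)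
          (integrableOn_Ioi_deriv_of_nonneg' hG' hG'_nonneg hlim)
          (ae_restrict_of_forall_mem measurableSet_Ioi hfG')
    _ = G a := by
      rw [integral_Ioi_of_hasDerivAt_of_nonneg' hG' hG'_nonneg hlim]; simp

theorem hasDerivAt_pow_mul_exp_neg_mul_sq (k : ℕ) (c y : ℝ) :
    HasDerivAt (fun y => y ^ k * exp (-c * y ^ 2))
      ((k * y ^ (k - 1) - 2 * c * y ^ (k + 1)) * exp (-c * y ^ 2)) y := by
  have hexp : HasDerivAt (fun y => exp (-c * y ^ 2)) (exp (-c * y ^ 2) * (-c * (2 * y))) y := by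
    simpa using ((hasDerivAt_pow 2 y).const_mul (-c)).exp
  refine ((hasDerivAt_pow k y).fun_mul hexp).congr_deriv ?_
  rw [pow_succ]
  ring

theorem tendsto_pow_mul_exp_neg_mul_sq_atTop {c : ℝ} (hc : 0 < c) (k : ℕ) :
    Tendsto (fun y => y ^ k * exp (-c * y ^ 2)) atTop (𝓝 0) := by
  have h := (tendsto_rpow_abs_mul_exp_neg_mul_sq_cocompact hc k).mono_left atTop_le_cocompact
  refine h.congr' ?_
  filter_upwards [eventually_ge_atTop 0] with y hy
  rw [abs_of_nonneg hy, rpow_natCast]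

theorem integral_Ioi_pow_mul_exp_neg_mul_sq_le (k : ℕ) {c R : ℝ} (hc : 0 < c) (hR : 0 < R)
    (hcR : (k + 2) / 2 ≤ c * R ^ 2) :
    ∫ y in Ioi R, y ^ (k + 1) * exp (-c * y ^ 2) ≤
      (k + 2) / (4 * c) * (R ^ k * exp (-c * R ^ 2)) := by
  set A : ℝ := (k + 2) / (4 * c) with hA
  refine integral_Ioi_le_of_hasDerivAt
    (fun y _ => (hasDerivAt_pow_mul_exp_neg_mul_sq k c y).const_mul A)
    (by simpa using (tendsto_pow_mul_exp_neg_mul_sq_atTop hc k).const_mul A)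
    (fun y hy => by have : 0 < y := hR.trans hy; positivity) fun y hy => ?_
  have hy0 : 0 < y := hR.trans hy
  have hAy : A ≤ y ^ 2 / 2 := by
    have : c * R ^ 2 ≤ c * y ^ 2 := by gcongr; exact hy.le
    rw [hA, div_le_iff₀ (by positivity)]
    linarith
  -- for `k = 0` both sides vanish, whatever the truncated `k - 1` is
  have hpow : (k : ℝ) * y ^ (k - 1) * y ^ 2 = k * y ^ (k + 1) := by
    rcases k with _ | k
    · simp
    · rw [mul_assoc, ← pow_add]; rfl
  have h2cA : 2 * c * A = (k + 2) / 2 := by rw [hA]; field_simp; ring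
  have hcorr : A * (k * y ^ (k - 1)) ≤ k / 2 * y ^ (k + 1) :=
    calc A * (k * y ^ (k - 1)) ≤ y ^ 2 / 2 * (k * y ^ (k - 1)) := by gcongr
      _ = k / 2 * y ^ (k + 1) := by linear_combination hpow / 2
  calc y ^ (k + 1) * exp (-c * y ^ 2)
      ≤ (2 * c * A * y ^ (k + 1) - A * (k * y ^ (k - 1))) * exp (-c * y ^ 2) := by
        gcongr; rw [h2cA]; linarith
    _ = -(A * ((k * y ^ (k - 1) - 2 * c * y ^ (k + 1)) * exp (-c * y ^ 2))) := by ring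

theorem stmt16 {d : ℕ} (n : ℕ) (hd : 1 ≤ d) (hdn : 2 ≤ d + n)
    (c R : ℝ) (hc : 0 < c) (hR : 0 < R)
    (hcR : ((d : ℝ) + n) / 2 < c * R ^ 2) :
    ∫ x in {x : EuclideanSpace ℝ (Fin d) | R < ‖x‖}, ‖x‖ ^ n * Real.exp (-c * ‖x‖ ^ 2) ≤
      2 * Real.pi ^ (d + n - 1) * c⁻¹ * max (((d : ℝ) + n) / 2) 1 * R ^ (d + n - 2) *
        Real.exp (-c * R ^ 2) := by
  have : Nonempty (Fin d) := Fin.pos_iff_nonempty.mp hd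
  set k := d + n - 2
  have hk : ((d : ℝ) + n) = k + 2 := by norm_cast; omega
  have hradial := integral_Ioi_pow_mul_exp_neg_mul_sq_le k hc hR (hk ▸ hcR.le)
  have hsphere := InnerProductSpace.finrank_mul_measureReal_unitBall_le
    (E := EuclideanSpace ℝ (Fin d))
  rw [setIntegral_lt_norm_fun_norm_addHaar volume (fun r => r ^ n * exp (-c * r ^ 2)) hR.le]
  simp_rw [finrank_euclideanSpace_fin, smul_eq_mul, nsmul_eq_mul, ← mul_assoc, ← pow_add,
    show d - 1 + n = k + 1 by omega] at hsphere ⊢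
  rw [max_eq_left (by rw [hk]; linarith [k.cast_nonneg (α := ℝ)]), hk]
  calc (d : ℝ) * volume.real (ball (0 : EuclideanSpace ℝ (Fin d)) 1) *
        ∫ y in Ioi R, y ^ (k + 1) * exp (-c * y ^ 2)
      ≤ (4 * √π ^ d) * ((k + 2) / (4 * c) * (R ^ k * exp (-c * R ^ 2))) := by
        gcongr
        exact setIntegral_nonneg measurableSet_Ioi fun y hy => by
          have : 0 < y := hR.trans hy; positivity
    _ ≤ (4 * π ^ (d + n - 1)) * ((k + 2) / (4 * c) * (R ^ k * exp (-c * R ^ 2))) := by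
        gcongr
        exact sqrt_pi_pow_le_pi_pow (by omega)
    _ = _ := by field_simp
end
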